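/- Let R be a commutative ring and ρ : R^n → R^n an R-module endomorphism of the free module R^n. If ρ is injective, then det(ρ) is not a zero divisor in R. -/

import Mathlib

/-! Injectivity of `ρ` means the columns of its matrix in a basis are linearly independent, and
by McCoy's theorem (`Matrix.Nonsingular.of_linearIndependent_col`) a square matrix with linearly
independent columns has a determinant that is not a zero divisor. -/

open Function

theorem Matrix.det_mem_nonZeroDivisors_of_mulVec_injective {R n : Type*} [CommRing R]
    [Fintype n] [DecidableEq n] {A : Matrix n n R} (hA : Injective A.mulVec) :
    A.det ∈ nonZeroDivisors R :=
  nonsingular_iff_det_mem_nonZeroDivisors.mp <|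
    .of_linearIndependent_col (mulVec_injective_iff.mp hA)

theorem LinearMap.det_mem_nonZeroDivisors_of_injective {R M : Type*} [CommRing R]
    [AddCommGroup M] [Module R M] [Module.Free R M] [Module.Finite R M] {f : M →ₗ[R] M}
    (hf : Injective f) : LinearMap.det f ∈ nonZeroDivisors R := by
  classical
  let b := Module.Free.chooseBasis R M
  rw [← det_toMatrix b]
  refine Matrix.det_mem_nonZeroDivisors_of_mulVec_injective ?_
  have hconj : (toMatrix b b f).mulVec = b.equivFun ∘ f ∘ b.equivFun.symm := by
    ext1 x
    have h := toMatrix_mulVec_repr b b f (b.equivFun.symm x)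
    rwa [← b.equivFun_apply, ← b.equivFun_apply, LinearEquiv.apply_symm_apply] at h
  rw [hconj]
  exact b.equivFun.injective.comp (hf.comp b.equivFun.symm.injective)

/-- An injective `R`-module endomorphism of `Rⁿ` over a commutative ring `R` has a
determinant which is not a zero divisor. -/
theorem det_not_zero_divisor_of_injective
    {R : Type*} [CommRing R] {n : ℕ}
    (ρ : (Fin n → R) →ₗ[R] (Fin n → R)) (hρ : Function.Injective ρ) :
    ∀ b : R, LinearMap.det ρ * b = 0 → b = 0 :=
  mem_nonZeroDivisors_iff_left.mp (LinearMap.det_mem_nonZeroDivisors_of_injective hρ)
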